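/- The group with presentation ⟨x₁, x₂, x₃, x₄ | xᵢx_{i+1} = x_{i+1}xᵢ for i = 1,2,3, and xᵢ(x₁x₂x₃x₄) = (x₁x₂x₃x₄)xᵢ for i = 1,2,3,4⟩ is isomorphic to the free abelian group ℤ⁴. -/

import Mathlib

/-!
Write `xᵢ₊₁` for `PresentedGroup.of i` and put `w = x₁x₂x₃x₄ = (x₁x₂)(x₃x₄)`. A generator commuting
with `w` and with one of the factors `x₁x₂`, `x₃x₄` commutes with the other one as well. Thus `x₃`
commutes with `x₁x₂`, hence with `x₁`; then `x₁` commutes with `x₃x₄`, hence with `x₄`; and `x₂`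
commutes with `x₃x₄`, hence with `x₄`. So the group is abelian. Every relator has the form
`uv(vu)⁻¹`, so sending `xᵢ` to the `i`-th basis vector defines a homomorphism onto `ℤ⁴`, with
inverse `(a, b, c, d) ↦ x₁ᵃ x₂ᵇ x₃ᶜ x₄ᵈ`.
-/

open FreeGroup in
def torusLinkRels : Set (FreeGroup (Fin 4)) :=
  { of 0 * of 1 * (of 1 * of 0)⁻¹,
    of 1 * of 2 * (of 2 * of 1)⁻¹,
    of 2 * of 3 * (of 3 * of 2)⁻¹,
    of 0 * (of 0 * of 1 * of 2 * of 3) * (of 0 * of 1 * of 2 * of 3 * of 0)⁻¹,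
    of 1 * (of 0 * of 1 * of 2 * of 3) * (of 0 * of 1 * of 2 * of 3 * of 1)⁻¹,
    of 2 * (of 0 * of 1 * of 2 * of 3) * (of 0 * of 1 * of 2 * of 3 * of 2)⁻¹,
    of 3 * (of 0 * of 1 * of 2 * of 3) * (of 0 * of 1 * of 2 * of 3 * of 3)⁻¹ }

abbrev TorusLinkGroup : Type := PresentedGroup torusLinkRels

section Group

variable {G : Type*} [Group G] {a b c : G}

theorem Commute.of_mul_right (hb : Commute a b) (hbc : Commute a (b * c)) : Commute a c := by
  simpa using hb.inv_right.mul_right hbc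

theorem Commute.of_mul_left (hc : Commute a c) (hbc : Commute a (b * c)) : Commute a b := by
  simpa using hbc.mul_right hc.inv_right

theorem mul_comm_of_closure_eq_top {s : Set G} (hs : Subgroup.closure s = ⊤)
    (hcomm : ∀ x ∈ s, ∀ y ∈ s, x * y = y * x) (x y : G) : x * y = y * x :=
  have hle := hs ▸ Subgroup.closure_le_centralizer_centralizer s
  Set.centralizer_centralizer_comm_of_comm hcomm x (hle trivial) y (hle trivial)

end Group

section CommGroup

variable {H : Type*} [CommGroup H]

theorem FreeGroup.lift_mul_mul_inv_mul_eq_one {α : Type*} (f : α → H) (u v : FreeGroup α) :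
    lift f (u * v * (v * u)⁻¹) = 1 := by
  rw [_root_.map_mul, _root_.map_inv, mul_inv_eq_one, _root_.map_mul, _root_.map_mul, mul_comm]

def zpowersProdHom (x : Fin 4 → H) : Multiplicative (ℤ × ℤ × ℤ × ℤ) →* H :=
  AddMonoidHom.toMultiplicativeLeft <|
    (zmultiplesHom _ (.ofMul (x 0))).coprod <| (zmultiplesHom _ (.ofMul (x 1))).coprod <|
      (zmultiplesHom _ (.ofMul (x 2))).coprod (zmultiplesHom _ (.ofMul (x 3)))

@[simp]
theorem zpowersProdHom_ofAdd (x : Fin 4 → H) (p : ℤ × ℤ × ℤ × ℤ) :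
    zpowersProdHom x (.ofAdd p) = x 0 ^ p.1 * x 1 ^ p.2.1 * x 2 ^ p.2.2.1 * x 3 ^ p.2.2.2 := by
  simp [zpowersProdHom, mul_assoc]

end CommGroup

namespace PresentedGroup

variable {α : Type*} {rels : Set (FreeGroup α)}

theorem commute_mk_of_mem {u v : FreeGroup α} (h : u * v * (v * u)⁻¹ ∈ rels) :
    Commute (mk rels u) (mk rels v) :=
  (map_mul _ u v).symm.trans <| (mk_eq_mk_of_mul_inv_mem h).trans (map_mul _ v u)

theorem mul_comm_of_commute_of (h : ∀ i j : α, Commute (of i : PresentedGroup rels) (of j))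
    (x y : PresentedGroup rels) : x * y = y * x :=
  mul_comm_of_closure_eq_top (closure_range_of rels)
    (by rintro _ ⟨i, rfl⟩ _ ⟨j, rfl⟩; exact h i j) x y

end PresentedGroup

namespace TorusLinkGroup

theorem commute_of (i j : Fin 4) :
    Commute (PresentedGroup.of i : TorusLinkGroup) (PresentedGroup.of j) := by
  set x : Fin 4 → TorusLinkGroup := PresentedGroup.of
  have rel {u v : FreeGroup (Fin 4)} (h : u * v * (v * u)⁻¹ ∈ torusLinkRels) :=
    PresentedGroup.commute_mk_of_mem h
  have h01 : Commute (x 0) (x 1) := rel (by simp [torusLinkRels])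
  have h12 : Commute (x 1) (x 2) := rel (by simp [torusLinkRels])
  have h23 : Commute (x 2) (x 3) := rel (by simp [torusLinkRels])
  have hw (i : Fin 4) : Commute (x i) (x 0 * x 1 * (x 2 * x 3)) := by
    rw [← mul_assoc]
    exact rel (u := .of i) (v := .of 0 * .of 1 * .of 2 * .of 3)
      (by fin_cases i <;> simp [torusLinkRels])
  have h02 : Commute (x 0) (x 2) := by
    have h2_01 : Commute (x 2) (x 0 * x 1) := ((Commute.refl _).mul_right h23).of_mul_left (hw 2)
    exact (h12.symm.of_mul_left h2_01).symm
  have h03 : Commute (x 0) (x 3) :=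
    h02.of_mul_right (((Commute.refl _).mul_right h01).of_mul_right (hw 0))
  have h13 : Commute (x 1) (x 3) :=
    h12.of_mul_right ((h01.symm.mul_right (.refl _)).of_mul_right (hw 1))
  fin_cases i <;> fin_cases j <;>
    first | exact .refl _ | assumption | exact Commute.symm (by assumption)

instance : CommGroup TorusLinkGroup where
  mul_comm := PresentedGroup.mul_comm_of_commute_of commute_of

def toZ4 : TorusLinkGroup →* Multiplicative (ℤ × ℤ × ℤ × ℤ) :=
  PresentedGroup.toGroup (f := ![.ofAdd (1, 0, 0, 0), .ofAdd (0, 1, 0, 0), .ofAdd (0, 0, 1, 0),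
    .ofAdd (0, 0, 0, 1)]) (by
    rintro r (rfl | rfl | rfl | rfl | rfl | rfl | rfl) <;>
      exact FreeGroup.lift_mul_mul_inv_mul_eq_one _ _ _)

def ofZ4 : Multiplicative (ℤ × ℤ × ℤ × ℤ) →* TorusLinkGroup :=
  zpowersProdHom PresentedGroup.of

def mulEquivZ4 : TorusLinkGroup ≃* Multiplicative (ℤ × ℤ × ℤ × ℤ) :=
  toZ4.toMulEquiv ofZ4
    (PresentedGroup.ext fun i => by fin_cases i <;> simp [toZ4, ofZ4])
    (MonoidHom.ext fun p => by
      obtain ⟨q, rfl⟩ := Multiplicative.ofAdd.surjective p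
      simp [toZ4, ofZ4, ← ofAdd_zsmul, ← ofAdd_add])

end TorusLinkGroup

open FreeGroup in
theorem stmt_1 :
    Nonempty
      (PresentedGroup
          ({ of 0 * of 1 * (of 1 * of 0)⁻¹,
             of 1 * of 2 * (of 2 * of 1)⁻¹,
             of 2 * of 3 * (of 3 * of 2)⁻¹,
             of 0 * (of 0 * of 1 * of 2 * of 3) * (of 0 * of 1 * of 2 * of 3 * of 0)⁻¹,
             of 1 * (of 0 * of 1 * of 2 * of 3) * (of 0 * of 1 * of 2 * of 3 * of 1)⁻¹,
             of 2 * (of 0 * of 1 * of 2 * of 3) * (of 0 * of 1 * of 2 * of 3 * of 2)⁻¹,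
             of 3 * (of 0 * of 1 * of 2 * of 3) * (of 0 * of 1 * of 2 * of 3 * of 3)⁻¹ }
            : Set (FreeGroup (Fin 4)))
        ≃* Multiplicative (ℤ × ℤ × ℤ × ℤ)) :=
  ⟨TorusLinkGroup.mulEquivZ4⟩
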